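/- Assume (Al) and that for every μ ∈ 𝒫₂(H) the map (x,q) ↦ l(x,μ,q) is Borel measurable on H × Λ̃. For Borel measurable X : (0,1) → H with ∫_0^1 |X(ω)|² dω < ∞ and Borel measurable Q : (0,1) → Λ with Q(ω) ∈ Λ̃ a.e. and ∫_0^1 |Q(ω)|²_Λ dω < ∞, define L(X,Q) := ∫_0^1 l(X(ω), X_#𝓛¹, Q(ω)) dω. Then L(X,Q) is well-defined and finite, and there is a constant C' ≥ 0 such that |L(X,Q) − L(Y,Q)| ≤ C'·(∫_0^1 |X(ω) − Y(ω)|²_{−1} dω)^{1/2} for all such X, Y and Q. -/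

import Mathlib

/-!
Pointwise, (Al) gives `|l(X, μ_X, Q) − l(Y, μ_Y, Q)| ≤ C (|X − Y|₋₁ + d₋₁,ᵣ(μ_X, μ_Y))`.
The pair `(X, Y)` is a coupling of the two laws, so `d₋₁,ᵣ(μ_X, μ_Y)` is at most the `Lʳ` norm of
`|X − Y|₋₁`; on a probability space both this and the `L¹` norm are bounded by the `L²` norm
(Jensen for `t ↦ t ^ (r / 2)`), whence `C' = 2C`. For integrability, (Al) with `μ = β` (where
`d₋₁,ᵣ` vanishes) makes `l₁` grow at most linearly in `x`, while `l₂` is squeezed between two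
quadratic functions of `‖q‖`; measurability follows after redefining `Q` on a null set so that it
takes values in `Λ̃`.
-/

open MeasureTheory
open scoped RealInnerProductSpace ENNReal

section

variable {H : Type*} [NormedAddCommGroup H] [InnerProductSpace ℝ H] [CompleteSpace H]
  [SecondCountableTopology H] [MeasurableSpace H] [BorelSpace H]
variable {Λ : Type*} [NormedAddCommGroup Λ] [InnerProductSpace ℝ Λ] [CompleteSpace Λ]
  [SecondCountableTopology Λ] [MeasurableSpace Λ] [BorelSpace Λ]

/-- `μ` is a Borel probability measure on `H` with finite second moment. -/
def IsP2 (μ : Measure H) : Prop :=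
  IsProbabilityMeasure μ ∧ (∫⁻ x, (‖x‖₊ : ℝ≥0∞) ^ 2 ∂μ) < ⊤

/-- The `r`-Wasserstein distance `d_r` on probability measures on `H`. -/
noncomputable def dr (r : ℝ) (μ β : Measure H) : ℝ :=
  sInf { c : ℝ | ∃ γ : Measure (H × H), IsProbabilityMeasure γ ∧
      γ.map Prod.fst = μ ∧ γ.map Prod.snd = β ∧
      c = (∫ p, ‖p.1 - p.2‖ ^ r ∂γ) ^ (1 / r) }

/-- The weak norm `|x|_{-1} = ⟨Bx, x⟩^{1/2}`. -/
noncomputable def nrmB (B : H →L[ℝ] H) (x : H) : ℝ := Real.sqrt ⟪B x, x⟫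

/-- The `r`-Wasserstein distance `d_{-1,r}` with respect to the weak norm `|·|_{-1}`. -/
noncomputable def drB (B : H →L[ℝ] H) (r : ℝ) (μ β : Measure H) : ℝ :=
  sInf { c : ℝ | ∃ γ : Measure (H × H), IsProbabilityMeasure γ ∧
      γ.map Prod.fst = μ ∧ γ.map Prod.snd = β ∧
      c = (∫ p, nrmB B (p.1 - p.2) ^ r ∂γ) ^ (1 / r) }

/-- The Hamiltonian `𝓗(x,μ,p) = inf_{q ∈ Λ̃} (⟨f(x,μ,q), p⟩ + l(x,μ,q))`. -/
noncomputable def Ham (f : H → Measure H → Λ → H) (l : H → Measure H → Λ → ℝ)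
    (Λt : Set Λ) (x : H) (μ : Measure H) (p : H) : ℝ :=
  sInf ((fun q => ⟪f x μ q, p⟫ + l x μ q) '' Λt)

section WeakNorm

variable {E : Type*} [NormedAddCommGroup E] [InnerProductSpace ℝ E]

lemma nrmB_nonneg (B : E →L[ℝ] E) (x : E) : 0 ≤ nrmB B x := Real.sqrt_nonneg _

lemma nrmB_le (B : E →L[ℝ] E) (x : E) : nrmB B x ≤ √‖B‖ * ‖x‖ := by
  calc nrmB B x ≤ √(‖B‖ * ‖x‖ ^ 2) := by
        refine Real.sqrt_le_sqrt ?_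
        calc ⟪B x, x⟫ ≤ ‖B x‖ * ‖x‖ := real_inner_le_norm _ _
          _ ≤ ‖B‖ * ‖x‖ * ‖x‖ := by gcongr; exact B.le_opNorm x
          _ = ‖B‖ * ‖x‖ ^ 2 := by ring
    _ = √‖B‖ * ‖x‖ := by rw [Real.sqrt_mul (norm_nonneg _), Real.sqrt_sq (norm_nonneg _)]

lemma continuous_nrmB (B : E →L[ℝ] E) : Continuous (nrmB B) :=
  Real.continuous_sqrt.comp (continuous_inner.comp (B.continuous.prodMk continuous_id))

variable [SecondCountableTopology E] [MeasurableSpace E] [BorelSpace E]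

lemma drB_map_le {α : Type*} [MeasurableSpace α] (B : E →L[ℝ] E) (r : ℝ)
    (m : Measure α) [IsProbabilityMeasure m] {X Y : α → E}
    (hX : Measurable X) (hY : Measurable Y) :
    drB B r (m.map X) (m.map Y) ≤ (∫ ω, nrmB B (X ω - Y ω) ^ r ∂m) ^ (1 / r) := by
  have hXY : Measurable fun ω => (X ω, Y ω) := hX.prodMk hY
  refine csInf_le ⟨0, fun c ⟨γ, _, _, _, hc⟩ => hc ▸ ?_⟩ ⟨m.map fun ω => (X ω, Y ω),
    Measure.isProbabilityMeasure_map hXY.aemeasurable,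
    by rw [Measure.map_map measurable_fst hXY]; rfl,
    by rw [Measure.map_map measurable_snd hXY]; rfl, ?_⟩
  · exact Real.rpow_nonneg (integral_nonneg fun p => Real.rpow_nonneg (nrmB_nonneg B _) r) _
  · rw [integral_map hXY.aemeasurable]
    exact (((continuous_nrmB B).measurable.comp (measurable_fst.sub measurable_snd)).pow_const
      r).aestronglyMeasurable

lemma drB_self (B : E →L[ℝ] E) {r : ℝ} (hr : 0 < r) (μ : Measure E) [IsProbabilityMeasure μ] :
    drB B r μ μ = 0 := by
  refine le_antisymm ?_ (Real.sInf_nonneg fun c ⟨γ, _, _, _, hc⟩ => hc ▸ ?_)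
  · simpa [nrmB, Real.zero_rpow hr.ne', hr.ne'] using drB_map_le B r μ measurable_id measurable_id
  · exact Real.rpow_nonneg (integral_nonneg fun p => Real.rpow_nonneg (nrmB_nonneg B _) r) _

end WeakNorm

section Moments

variable {α : Type*} [MeasurableSpace α] {m : Measure α}

lemma integral_rpow_rpow_le_sqrt_integral_sq [IsProbabilityMeasure m] {g : α → ℝ}
    (hg : MemLp g 2 m) (hg0 : ∀ ω, 0 ≤ g ω) {r : ℝ} (hr0 : 0 < r) (hr2 : r ≤ 2) :
    (∫ ω, g ω ^ r ∂m) ^ (1 / r) ≤ √(∫ ω, g ω ^ 2 ∂m) := by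
  have hpow : ∀ ω, (g ω ^ 2) ^ (r / 2) = g ω ^ r := fun ω => by
    rw [← Real.rpow_natCast, ← Real.rpow_mul (hg0 ω)]; ring_nf
  have hsq : Integrable (fun ω => g ω ^ 2) m := (memLp_two_iff_integrable_sq hg.1).1 hg
  have hr : Integrable (fun ω => g ω ^ r) m := by
    have := (hg.mono_exponent (p := ENNReal.ofReal r) (by
      rw [← ENNReal.ofReal_ofNat]; exact ENNReal.ofReal_le_ofReal hr2)).integrable_norm_rpow'
    simpa [ENNReal.toReal_ofReal hr0.le, Real.norm_of_nonneg (hg0 _)] using this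
  -- Jensen for the concave map `t ↦ t ^ (r / 2)` applied to `g ^ 2`
  have hJensen : ∫ ω, g ω ^ r ∂m ≤ (∫ ω, g ω ^ 2 ∂m) ^ (r / 2) := by
    simpa only [hpow] using
      (Real.concaveOn_rpow (p := r / 2) (by positivity) (by linarith)).le_map_integral
      (Real.continuous_rpow_const (by positivity)).continuousOn isClosed_Ici
      (Filter.Eventually.of_forall fun ω => sq_nonneg (g ω)) hsq
      (by simpa only [Function.comp_def, hpow] using hr)
  have hsq0 : 0 ≤ ∫ ω, g ω ^ 2 ∂m := integral_nonneg fun ω => sq_nonneg _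
  calc (∫ ω, g ω ^ r ∂m) ^ (1 / r) ≤ ((∫ ω, g ω ^ 2 ∂m) ^ (r / 2)) ^ (1 / r) :=
        Real.rpow_le_rpow (integral_nonneg fun ω => Real.rpow_nonneg (hg0 ω) r) hJensen
          (by positivity)
    _ = √(∫ ω, g ω ^ 2 ∂m) := by
        rw [← Real.rpow_mul hsq0, Real.sqrt_eq_rpow]; congr 1; field_simp

lemma memLp_two_iff_lintegral_sq_lt_top {F : Type*} [NormedAddCommGroup F] {X : α → F}
    (hX : AEStronglyMeasurable X m) :
    MemLp X 2 m ↔ ∫⁻ ω, (‖X ω‖₊ : ℝ≥0∞) ^ 2 ∂m < ⊤ := by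
  rw [MemLp, eLpNorm_lt_top_iff_lintegral_rpow_enorm_lt_top two_ne_zero ENNReal.ofNat_ne_top]
  simp [hX, enorm_eq_nnnorm]

lemma isP2_map [IsProbabilityMeasure m] {F : Type*} [NormedAddCommGroup F] [MeasurableSpace F]
    [BorelSpace F] {X : α → F} (hX : Measurable X) (h : MemLp X 2 m) : IsP2 (m.map X) :=
  ⟨Measure.isProbabilityMeasure_map hX.aemeasurable, by
    rw [lintegral_map (measurable_nnnorm.coe_nnreal_ennreal.pow_const 2) hX]
    exact (memLp_two_iff_lintegral_sq_lt_top h.1).1 h⟩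

lemma MemLp.nrmB_comp {E : Type*} [NormedAddCommGroup E] [InnerProductSpace ℝ E]
    (B : E →L[ℝ] E) {p : ℝ≥0∞} {X : α → E} (hX : MemLp X p m) :
    MemLp (fun ω => nrmB B (X ω)) p m :=
  (hX.norm.const_mul √‖B‖).of_le ((continuous_nrmB B).comp_aestronglyMeasurable hX.1)
    (Filter.Eventually.of_forall fun ω => by
      simpa [Real.norm_of_nonneg (nrmB_nonneg B _), abs_of_nonneg (Real.sqrt_nonneg _)] using
        nrmB_le B (X ω))

end Moments

lemma Measurable.aemeasurable_comp_of_ae_mem {α β γ δ : Type*} [MeasurableSpace α]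
    [MeasurableSpace β] [MeasurableSpace γ] [MeasurableSpace δ] {m : Measure α} {s : Set γ}
    {Φ : β → γ → δ} (hΦ : Measurable fun z : β × s => Φ z.1 z.2) (hs : s.Nonempty)
    {X : α → β} {Q : α → γ} (hX : AEMeasurable X m) (hQ : AEMeasurable Q m)
    (hQs : ∀ᵐ ω ∂m, Q ω ∈ s) : AEMeasurable (fun ω => Φ (X ω) (Q ω)) m := by
  obtain ⟨Q', hQ'm, hQ's, hQQ'⟩ := hQ.exists_ae_eq_range_subset hQs hs
  refine (hΦ.comp_aemeasurable (hX.prodMk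
    (hQ'm.subtype_mk (h := fun ω => hQ's ⟨ω, rfl⟩)).aemeasurable)).congr ?_
  filter_upwards [hQQ'] with ω hω
  simp [hω]

section Integrability

variable {α E F : Type*} [MeasurableSpace α] {m : Measure α}
  [NormedAddCommGroup E] [MeasurableSpace E] [BorelSpace E]
  [NormedAddCommGroup F] [MeasurableSpace F] [BorelSpace F]

lemma integrable_add_of_linear_growth_of_quadratic_bounds [IsFiniteMeasure m] {s : Set F}
    (hs : s.Nonempty) {f : E → ℝ} {g : E → F → ℝ} {a b C₁ C₂ C₃ : ℝ}
    (hf : ∀ x, |f x| ≤ a + b * ‖x‖)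
    (hg : ∀ x, ∀ q ∈ s, -C₁ + C₂ * ‖q‖ ^ 2 ≤ g x q ∧ g x q ≤ C₁ + C₃ * ‖q‖ ^ 2)
    (hfg : Measurable fun z : E × s => f z.1 + g z.1 z.2)
    {X : α → E} {Q : α → F} (hX : Integrable X m) (hQ : MemLp Q 2 m) (hQs : ∀ᵐ ω ∂m, Q ω ∈ s) :
    Integrable (fun ω => f (X ω) + g (X ω) (Q ω)) m := by
  have hmeas : AEStronglyMeasurable (fun ω => f (X ω) + g (X ω) (Q ω)) m :=
    (hfg.aemeasurable_comp_of_ae_mem (Φ := fun x q => f x + g x q) hs hX.1.aemeasurable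
      hQ.1.aemeasurable hQs).aestronglyMeasurable
  have hX1 : Integrable (fun ω => a + b * ‖X ω‖) m :=
    (integrable_const a).add (hX.norm.const_mul b)
  have hQ2 : Integrable (fun ω => ‖Q ω‖ ^ 2) m := (memLp_two_iff_integrable_sq_norm hQ.1).1 hQ
  refine integrable_of_le_of_le hmeas
    (g₁ := fun ω => -(a + b * ‖X ω‖) + (-C₁ + C₂ * ‖Q ω‖ ^ 2))
    (g₂ := fun ω => (a + b * ‖X ω‖) + (C₁ + C₃ * ‖Q ω‖ ^ 2)) ?_ ?_
    (hX1.neg.add ((integrable_const _).add (hQ2.const_mul C₂)))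
    (hX1.add ((integrable_const _).add (hQ2.const_mul C₃)))
  all_goals
    filter_upwards [hQs] with ω hω
    have hfX := abs_le.1 (hf (X ω))
    have hgXQ := hg (X ω) (Q ω) hω
    linarith

end Integrability

section LipschitzCost

variable {α E F : Type*} [MeasurableSpace α] {m : Measure α}
  [NormedAddCommGroup E] [InnerProductSpace ℝ E] [MeasurableSpace E]

noncomputable def liftedRunningCost (l₁ : E → Measure E → ℝ) (l₂ : E → Measure E → F → ℝ)
    (m : Measure α) (X : α → E) (Q : α → F) (ω : α) : ℝ :=
  l₁ (X ω) (m.map X) + l₂ (X ω) (m.map X) (Q ω)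

/-- The Lipschitz half of assumption (Al). -/
def CostLipschitz (B : E →L[ℝ] E) (r Cl : ℝ) (s : Set F) (l₁ : E → Measure E → ℝ)
    (l₂ : E → Measure E → F → ℝ) : Prop :=
  ∀ (x y : E) (μ β : Measure E) (q : F), IsP2 μ → IsP2 β → q ∈ s →
    |l₁ x μ - l₁ y β| + |l₂ x μ q - l₂ y β q| ≤ Cl * (nrmB B (x - y) + drB B r μ β)

variable [SecondCountableTopology E] [BorelSpace E]
variable {B : E →L[ℝ] E} {r Cl : ℝ} {s : Set F} {l₁ : E → Measure E → ℝ}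
  {l₂ : E → Measure E → F → ℝ}

lemma CostLipschitz.abs_le_add_mul_norm (hl : CostLipschitz B r Cl s l₁ l₂) (hr : 0 < r)
    (hCl : 0 ≤ Cl) {μ : Measure E} (hμ : IsP2 μ) {q : F} (hq : q ∈ s) (x : E) :
    |l₁ x μ| ≤ |l₁ 0 μ| + Cl * √‖B‖ * ‖x‖ := by
  have : IsProbabilityMeasure μ := hμ.1
  have hlip := hl x 0 μ μ q hμ hμ hq
  rw [sub_zero, drB_self B hr, add_zero] at hlip
  have hB := mul_le_mul_of_nonneg_left (nrmB_le B x) hCl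
  have htri := abs_sub_abs_le_abs_sub (l₁ x μ) (l₁ 0 μ)
  have hl₂ := abs_nonneg (l₂ x μ q - l₂ 0 μ q)
  linarith

lemma CostLipschitz.abs_integral_sub_le [IsProbabilityMeasure m]
    (hl : CostLipschitz B r Cl s l₁ l₂) (hr0 : 0 < r) (hr2 : r ≤ 2) (hCl : 0 ≤ Cl)
    {X Y : α → E} {Q : α → F} (hX : Measurable X) (hY : Measurable Y)
    (hX2 : MemLp X 2 m) (hY2 : MemLp Y 2 m) (hQs : ∀ᵐ ω ∂m, Q ω ∈ s)
    (hIX : Integrable (liftedRunningCost l₁ l₂ m X Q) m)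
    (hIY : Integrable (liftedRunningCost l₁ l₂ m Y Q) m) :
    |∫ ω, liftedRunningCost l₁ l₂ m X Q ω ∂m - ∫ ω, liftedRunningCost l₁ l₂ m Y Q ω ∂m|
      ≤ 2 * Cl * √(∫ ω, nrmB B (X ω - Y ω) ^ 2 ∂m) := by
  set g : α → ℝ := fun ω => nrmB B (X ω - Y ω)
  set D := drB B r (m.map X) (m.map Y)
  have hg2 : MemLp g 2 m := MemLp.nrmB_comp B (hX2.sub hY2)
  have hg0 : ∀ ω, 0 ≤ g ω := fun ω => nrmB_nonneg B _
  have hgL1 : ∫ ω, g ω ∂m ≤ √(∫ ω, g ω ^ 2 ∂m) := by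
    simpa using integral_rpow_rpow_le_sqrt_integral_sq hg2 hg0 one_pos one_le_two
  -- the coupling `(X, Y)` of the two laws bounds their distance
  have hD : D ≤ √(∫ ω, g ω ^ 2 ∂m) :=
    (drB_map_le B r m hX hY).trans (integral_rpow_rpow_le_sqrt_integral_sq hg2 hg0 hr0 hr2)
  have hpt : ∀ᵐ ω ∂m, |liftedRunningCost l₁ l₂ m X Q ω - liftedRunningCost l₁ l₂ m Y Q ω|
      ≤ Cl * (g ω + D) := by
    filter_upwards [hQs] with ω hω
    have hlip := hl (X ω) (Y ω) _ _ (Q ω) (isP2_map hX hX2) (isP2_map hY hY2) hω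
    have htri := abs_add_le (l₁ (X ω) (m.map X) - l₁ (Y ω) (m.map Y))
      (l₂ (X ω) (m.map X) (Q ω) - l₂ (Y ω) (m.map Y) (Q ω))
    simp only [liftedRunningCost]
    rw [add_sub_add_comm]
    linarith
  have hgI : Integrable g m := hg2.integrable one_le_two
  calc |∫ ω, liftedRunningCost l₁ l₂ m X Q ω ∂m - ∫ ω, liftedRunningCost l₁ l₂ m Y Q ω ∂m|
      = |∫ ω, (liftedRunningCost l₁ l₂ m X Q ω - liftedRunningCost l₁ l₂ m Y Q ω) ∂m| := by
        rw [integral_sub hIX hIY]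
    _ ≤ ∫ ω, |liftedRunningCost l₁ l₂ m X Q ω - liftedRunningCost l₁ l₂ m Y Q ω| ∂m :=
        abs_integral_le_integral_abs
    _ ≤ ∫ ω, Cl * (g ω + D) ∂m :=
        integral_mono_ae (hIX.sub hIY).abs ((hgI.add (integrable_const D)).const_mul Cl) hpt
    _ = Cl * (∫ ω, g ω ∂m + D) := by
        rw [integral_const_mul, integral_add hgI (integrable_const D), integral_const]
        simp
    _ ≤ Cl * (√(∫ ω, g ω ^ 2 ∂m) + √(∫ ω, g ω ^ 2 ∂m)) := by gcongr
    _ = 2 * Cl * √(∫ ω, nrmB B (X ω - Y ω) ^ 2 ∂m) := by ring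

end LipschitzCost

theorem statement13_general
    (r : ℝ) (hr1 : 1 ≤ r) (hr2 : r < 2)
    (B : H →L[ℝ] H)
    (l₁ : H → Measure H → ℝ) (l₂ : H → Measure H → Λ → ℝ)
    (Λt : Set Λ) (hΛne : Λt.Nonempty)
    -- Assumption (Al)
    (Cl : ℝ) (hCl : 0 ≤ Cl)
    (hl_lip : ∀ (x y : H) (μ β : Measure H) (q : Λ), IsP2 μ → IsP2 β → q ∈ Λt →
      |l₁ x μ - l₁ y β| + |l₂ x μ q - l₂ y β q| ≤ Cl * (nrmB B (x - y) + drB B r μ β))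
    (C₁ C₂ C₃ : ℝ)
    (hl₂bd : ∀ (x : H) (μ : Measure H) (q : Λ), IsP2 μ → q ∈ Λt →
      -C₁ + C₂ * ‖q‖ ^ 2 ≤ l₂ x μ q ∧ l₂ x μ q ≤ C₁ + C₃ * ‖q‖ ^ 2)
    -- Borel measurability of `l` on `H × Λ̃`
    (hlm : ∀ μ : Measure H,
      Measurable (fun z : H × Λt => l₁ z.1 μ + l₂ z.1 μ (z.2 : Λ))) :
    ∃ C' : ℝ, 0 ≤ C' ∧
      ∀ (X Y : ℝ → H) (Q : ℝ → Λ), Measurable X → Measurable Y → Measurable Q →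
        (∫⁻ ω in Set.Ioo (0:ℝ) 1, (‖X ω‖₊ : ℝ≥0∞) ^ 2) < ⊤ →
        (∫⁻ ω in Set.Ioo (0:ℝ) 1, (‖Y ω‖₊ : ℝ≥0∞) ^ 2) < ⊤ →
        (∀ᵐ ω ∂(volume.restrict (Set.Ioo (0:ℝ) 1)), Q ω ∈ Λt) →
        (∫⁻ ω in Set.Ioo (0:ℝ) 1, (‖Q ω‖₊ : ℝ≥0∞) ^ 2) < ⊤ →
        Integrable
          (fun ω => l₁ (X ω) (Measure.map X (volume.restrict (Set.Ioo (0:ℝ) 1))) +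
            l₂ (X ω) (Measure.map X (volume.restrict (Set.Ioo (0:ℝ) 1))) (Q ω))
          (volume.restrict (Set.Ioo (0:ℝ) 1)) ∧
        |(∫ ω in Set.Ioo (0:ℝ) 1,
              (l₁ (X ω) (Measure.map X (volume.restrict (Set.Ioo (0:ℝ) 1))) +
                l₂ (X ω) (Measure.map X (volume.restrict (Set.Ioo (0:ℝ) 1))) (Q ω))) -
            (∫ ω in Set.Ioo (0:ℝ) 1,
              (l₁ (Y ω) (Measure.map Y (volume.restrict (Set.Ioo (0:ℝ) 1))) +
                l₂ (Y ω) (Measure.map Y (volume.restrict (Set.Ioo (0:ℝ) 1))) (Q ω)))|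
          ≤ C' * Real.sqrt (∫ ω in Set.Ioo (0:ℝ) 1, nrmB B (X ω - Y ω) ^ 2) := by
  set m : Measure ℝ := volume.restrict (Set.Ioo 0 1)
  have : IsProbabilityMeasure m := ⟨by simp [m]⟩
  have hr0 : 0 < r := by linarith
  have hl : CostLipschitz B r Cl Λt l₁ l₂ := hl_lip
  obtain ⟨q₀, hq₀⟩ := hΛne
  refine ⟨2 * Cl, by positivity, fun X Y Q hX hY hQ hX2 hY2 hQs hQ2 => ?_⟩
  rw [← memLp_two_iff_lintegral_sq_lt_top hX.aestronglyMeasurable] at hX2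
  rw [← memLp_two_iff_lintegral_sq_lt_top hY.aestronglyMeasurable] at hY2
  rw [← memLp_two_iff_lintegral_sq_lt_top hQ.aestronglyMeasurable] at hQ2
  have hI : ∀ Z : ℝ → H, Measurable Z → MemLp Z 2 m →
      Integrable (liftedRunningCost l₁ l₂ m Z Q) m := fun Z hZ hZ2 =>
    have hZm := isP2_map hZ hZ2
    integrable_add_of_linear_growth_of_quadratic_bounds ⟨q₀, hq₀⟩
      (hl.abs_le_add_mul_norm hr0 hCl hZm hq₀) (fun x q => hl₂bd x _ q hZm) (hlm _)
      (hZ2.integrable one_le_two) hQ2 hQs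
  exact ⟨hI X hX hX2, hl.abs_integral_sub_le hr0 hr2.le hCl hX hY hX2 hY2 hQs
    (hI X hX hX2) (hI Y hY hY2)⟩

/-- Under (Al) and Borel measurability of `l` on `H × Λ̃`, the lifted
running cost `L(X,Q) = ∫₀¹ l(X(ω),X_#𝓛¹,Q(ω)) dω` is well defined (the integrand is
integrable), and there is `C' ≥ 0` with
`|L(X,Q) − L(Y,Q)| ≤ C'·(∫₀¹ |X(ω)−Y(ω)|²_{−1} dω)^{1/2}`. -/
theorem statement13
    (r : ℝ) (hr1 : 1 ≤ r) (hr2 : r < 2)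
    (B : H →L[ℝ] H)
    (hBsa : ∀ x y : H, ⟪B x, y⟫ = ⟪x, B y⟫)
    (hBpos : ∀ x : H, x ≠ 0 → 0 < ⟪B x, x⟫)
    (l₁ : H → Measure H → ℝ) (l₂ : H → Measure H → Λ → ℝ)
    (Λt : Set Λ) (hΛne : Λt.Nonempty) (hΛconv : Convex ℝ Λt)
    -- Assumption (Al)
    (Cl : ℝ) (hCl : 0 ≤ Cl)
    (hl_lip : ∀ (x y : H) (μ β : Measure H) (q : Λ), IsP2 μ → IsP2 β → q ∈ Λt →
      |l₁ x μ - l₁ y β| + |l₂ x μ q - l₂ y β q| ≤ Cl * (nrmB B (x - y) + drB B r μ β))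
    (C₁ C₂ C₃ : ℝ) (hC₁ : 0 ≤ C₁) (hC₂ : 0 < C₂) (hC₃ : 0 < C₃)
    (hl₂bd : ∀ (x : H) (μ : Measure H) (q : Λ), IsP2 μ → q ∈ Λt →
      -C₁ + C₂ * ‖q‖ ^ 2 ≤ l₂ x μ q ∧ l₂ x μ q ≤ C₁ + C₃ * ‖q‖ ^ 2)
    -- Borel measurability of `l` on `H × Λ̃`
    (hlm : ∀ μ : Measure H,
      Measurable (fun z : H × Λt => l₁ z.1 μ + l₂ z.1 μ (z.2 : Λ))) :
    ∃ C' : ℝ, 0 ≤ C' ∧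
      ∀ (X Y : ℝ → H) (Q : ℝ → Λ), Measurable X → Measurable Y → Measurable Q →
        (∫⁻ ω in Set.Ioo (0:ℝ) 1, (‖X ω‖₊ : ℝ≥0∞) ^ 2) < ⊤ →
        (∫⁻ ω in Set.Ioo (0:ℝ) 1, (‖Y ω‖₊ : ℝ≥0∞) ^ 2) < ⊤ →
        (∀ᵐ ω ∂(volume.restrict (Set.Ioo (0:ℝ) 1)), Q ω ∈ Λt) →
        (∫⁻ ω in Set.Ioo (0:ℝ) 1, (‖Q ω‖₊ : ℝ≥0∞) ^ 2) < ⊤ →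
        Integrable
          (fun ω => l₁ (X ω) (Measure.map X (volume.restrict (Set.Ioo (0:ℝ) 1))) +
            l₂ (X ω) (Measure.map X (volume.restrict (Set.Ioo (0:ℝ) 1))) (Q ω))
          (volume.restrict (Set.Ioo (0:ℝ) 1)) ∧
        |(∫ ω in Set.Ioo (0:ℝ) 1,
              (l₁ (X ω) (Measure.map X (volume.restrict (Set.Ioo (0:ℝ) 1))) +
                l₂ (X ω) (Measure.map X (volume.restrict (Set.Ioo (0:ℝ) 1))) (Q ω))) -
            (∫ ω in Set.Ioo (0:ℝ) 1,
              (l₁ (Y ω) (Measure.map Y (volume.restrict (Set.Ioo (0:ℝ) 1))) +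
                l₂ (Y ω) (Measure.map Y (volume.restrict (Set.Ioo (0:ℝ) 1))) (Q ω)))|
          ≤ C' * Real.sqrt (∫ ω in Set.Ioo (0:ℝ) 1, nrmB B (X ω - Y ω) ^ 2) :=
  statement13_general r hr1 hr2 B l₁ l₂ Λt hΛne Cl hCl hl_lip C₁ C₂ C₃ hl₂bd hlm

end
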